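/- If h(P,J) is additive in J for each fixed P, and X₁ ⊆ X₂ ⊆ ⋯ is an increasing sequence of sets with union X, then V(h; I; X) = lim_{j→∞} V(h; I; Xⱼ). In particular, outer measure is continuous from below: μ*(X ∩ I) = lim_{j→∞} μ*(Xⱼ ∩ I). -/

import Mathlib

open Set Filter

/-- A brick (compact non-degenerate interval) in `ι → ℝ`. -/
structure Brick (ι : Type*) [Fintype ι] where
  lower : ι → ℝ
  upper : ι → ℝ
  lt : ∀ j, lower j < upper j

variable {ι : Type*} [Fintype ι]

namespace Brick

/-- The underlying closed set of a brick. -/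
def toSet (I : Brick ι) : Set (ι → ℝ) := {x | ∀ j, x j ∈ Set.Icc (I.lower j) (I.upper j)}

/-- The open interior of a brick. -/
def inter (I : Brick ι) : Set (ι → ℝ) := {x | ∀ j, x j ∈ Set.Ioo (I.lower j) (I.upper j)}

/-- The volume of a brick. -/
noncomputable def vol (I : Brick ι) : ℝ := ∏ j, (I.upper j - I.lower j)

end Brick

/-- A tagged division of a brick `I`: finitely many non-overlapping sub-bricks covering `I`,
each with a tag point belonging to it. -/
structure TaggedDiv {ι : Type*} [Fintype ι] (I : Brick ι) where
  pieces : Finset (Brick ι × (ι → ℝ))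
  subset_of_mem : ∀ p ∈ pieces, (p.1 : Brick ι).toSet ⊆ I.toSet
  tag_mem : ∀ p ∈ pieces, p.2 ∈ (p.1 : Brick ι).toSet
  nonoverlap : ∀ p ∈ pieces, ∀ q ∈ pieces, p ≠ q →
    (p.1 : Brick ι).inter ∩ (q.1 : Brick ι).inter = ∅
  cover : I.toSet = ⋃ p ∈ pieces, (p.1 : Brick ι).toSet

/-- A gauge on a brick: a function positive at each point of the brick. -/
def IsGauge (I : Brick ι) (δ : (ι → ℝ) → ℝ) : Prop := ∀ x ∈ I.toSet, 0 < δ x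

/-- A tagged division is compatible with the gauge `δ` if each brick lies in the open ball
of radius `δ` about its tag. -/
def Compat {I : Brick ι} (D : TaggedDiv I) (δ : (ι → ℝ) → ℝ) : Prop :=
  ∀ p ∈ D.pieces, (p.1 : Brick ι).toSet ⊆ Metric.ball p.2 (δ p.2)

/-- The Riemann sum of `f` over a tagged division. -/
noncomputable def riemannSum {I : Brick ι} (f : (ι → ℝ) → ℝ) (D : TaggedDiv I) : ℝ :=
  ∑ p ∈ D.pieces, f p.2 * (p.1 : Brick ι).vol

/-- `f` has Henstock–Kurzweil integral `A` on the brick `I`. -/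
def HasHK (I : Brick ι) (f : (ι → ℝ) → ℝ) (A : ℝ) : Prop :=
  ∀ ε > 0, ∃ δ : (ι → ℝ) → ℝ, IsGauge I δ ∧
    ∀ D : TaggedDiv I, Compat D δ → |riemannSum f D - A| < ε

open scoped ENNReal Classical

/-- The sum of `|h|` over a tagged division, for an interval-point function `h`. -/
noncomputable def varSum {I : Brick ι} (h : Brick ι → (ι → ℝ) → ℝ) (D : TaggedDiv I) : ℝ :=
  ∑ p ∈ D.pieces, |h p.1 p.2|

/-- The (Henstock) variation of an interval-point function `h` on a brick `I`. -/
noncomputable def variation (I : Brick ι) (h : Brick ι → (ι → ℝ) → ℝ) : ℝ≥0∞ :=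
  ⨅ δ ∈ {δ : (ι → ℝ) → ℝ | IsGauge I δ},
    ⨆ D ∈ {D : TaggedDiv I | Compat D δ}, ENNReal.ofReal (varSum h D)

/-- The variation of `h` on `I` with tags restricted to the set `X`. -/
noncomputable def variationOn (I : Brick ι) (h : Brick ι → (ι → ℝ) → ℝ)
    (X : Set (ι → ℝ)) : ℝ≥0∞ :=
  variation I (fun J P => if P ∈ X then h J P else 0)

/-- The outer measure of a set `X` in the brick `I`, defined via the Henstock variation of
the volume function restricted to `X`. -/
noncomputable def mustar (I : Brick ι) (X : Set (ι → ℝ)) : ℝ≥0∞ :=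
  variationOn I (fun J _ => J.vol) X

/-!
Monotonicity in the set gives `≥`. For `≤`, take `e i > 0` with `∑ e i < ε` and gauges `δ i`
within `e i` of the variation over `X i`, and use `δ i` at the points first reached by `X i`. A
fine division then splits, by this index, into partial divisions `π i` tagged in `X i`. A
Saks–Henstock lemma bounds `π i` by `e i` plus the variation over `X i` localized to the bricks
of `π i`, and these localized variations of non-overlapping families of bricks add up to at most
the variation over `X N`, `N` the largest index present.

The Saks–Henstock lemma is where additivity of `h` enters: cutting a brick into orthants at its
tag, for a gauge that stays clear of the faces of a given division not passing through the tag,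
puts every orthant inside a single brick of that division.
-/

open BoxIntegral
open scoped NNReal

/-! ### Bricks and half-open boxes -/

namespace Brick

@[ext]
theorem ext {J K : Brick ι} (hl : J.lower = K.lower) (hu : J.upper = K.upper) : J = K := by
  cases J; cases K; cases hl; cases hu; rfl

theorem toSet_eq_pi (J : Brick ι) : J.toSet = univ.pi fun c => Icc (J.lower c) (J.upper c) := by
  ext; exact mem_univ_pi.symm

theorem inter_eq_pi (J : Brick ι) : J.inter = univ.pi fun c => Ioo (J.lower c) (J.upper c) := by
  ext; exact mem_univ_pi.symm

theorem toSet_eq_Icc (J : Brick ι) : J.toSet = Icc J.lower J.upper := by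
  rw [toSet_eq_pi, pi_univ_Icc]

theorem lower_mem_toSet (J : Brick ι) : J.lower ∈ J.toSet := fun c => ⟨le_rfl, (J.lt c).le⟩

theorem upper_mem_toSet (J : Brick ι) : J.upper ∈ J.toSet := fun c => ⟨(J.lt c).le, le_rfl⟩

theorem isClosed_toSet (J : Brick ι) : IsClosed J.toSet :=
  J.toSet_eq_Icc ▸ isClosed_Icc

theorem inter_subset_toSet (J : Brick ι) : J.inter ⊆ J.toSet := fun _ hx c =>
  Ioo_subset_Icc_self (hx c)

noncomputable def mid (J : Brick ι) : ι → ℝ := fun c => (J.lower c + J.upper c) / 2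

theorem mid_mem_inter (J : Brick ι) : J.mid ∈ J.inter := fun c => by
  have := J.lt c; constructor <;> simp only [mid] <;> linarith

theorem mid_mem_toSet (J : Brick ι) : J.mid ∈ J.toSet := J.inter_subset_toSet J.mid_mem_inter

theorem inter_nonempty (J : Brick ι) : J.inter.Nonempty := ⟨J.mid, J.mid_mem_inter⟩

theorem inter_mono {J K : Brick ι} (h : J.toSet ⊆ K.toSet) : J.inter ⊆ K.inter := by
  rw [toSet_eq_Icc, toSet_eq_Icc, Icc_subset_Icc_iff (fun c => (J.lt c).le)] at h
  exact fun x hx c => ⟨(h.1 c).trans_lt (hx c).1, (hx c).2.trans_le (h.2 c)⟩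

theorem inter_inter_eq_empty_of_subset {J J' K K' : Brick ι} (hJ : J.toSet ⊆ K.toSet)
    (hJ' : J'.toSet ⊆ K'.toSet) (h : K.inter ∩ K'.inter = ∅) : J.inter ∩ J'.inter = ∅ :=
  subset_empty_iff.1 (h ▸ inter_subset_inter (inter_mono hJ) (inter_mono hJ'))

theorem vol_nonneg (J : Brick ι) : 0 ≤ J.vol :=
  Finset.prod_nonneg fun c _ => sub_nonneg.2 (J.lt c).le

def toBox (J : Brick ι) : Box ι := ⟨J.lower, J.upper, J.lt⟩

def ofBox (B : Box ι) : Brick ι := ⟨B.lower, B.upper, B.lower_lt_upper⟩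

@[simp]
theorem ofBox_toBox (J : Brick ι) : ofBox J.toBox = J := rfl

theorem toSet_ofBox (B : Box ι) : (ofBox B).toSet = Box.Icc B := by
  rw [toSet_eq_Icc, Box.Icc_def]; rfl

theorem toSet_eq_Icc_toBox (J : Brick ι) : J.toSet = Box.Icc J.toBox := by
  rw [← toSet_ofBox, ofBox_toBox]

theorem toBox_le_toBox_iff {J K : Brick ι} : J.toBox ≤ K.toBox ↔ J.toSet ⊆ K.toSet := by
  rw [Box.le_iff_Icc, toSet_eq_Icc_toBox, toSet_eq_Icc_toBox]

theorem coe_toBox_subset_toSet (J : Brick ι) : (J.toBox : Set (ι → ℝ)) ⊆ J.toSet :=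
  J.toSet_eq_Icc_toBox ▸ Box.coe_subset_Icc

theorem closure_coe_toBox (J : Brick ι) : closure (J.toBox : Set (ι → ℝ)) = J.toSet := by
  simp [Box.coe_eq_pi, closure_pi_set, toBox, toSet_eq_pi, (J.lt _).ne]

theorem inter_inter_eq_empty_iff {J K : Brick ι} :
    J.inter ∩ K.inter = ∅ ↔ Disjoint (J.toBox : Set (ι → ℝ)) K.toBox := by
  rw [Set.disjoint_iff_inter_eq_empty, inter_eq_pi, inter_eq_pi, Box.coe_eq_pi, Box.coe_eq_pi,
    ← pi_inter_distrib, ← pi_inter_distrib]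
  simp only [univ_pi_eq_empty_iff, Ioo_inter_Ioo, Ioc_inter_Ioc, Ioo_eq_empty_iff,
    Ioc_eq_empty_iff]
  rfl

end Brick

/-! ### Partial divisions and Cousin's lemma -/

structure IsPartialDiv (I : Brick ι) (π : Finset (Brick ι × (ι → ℝ))) : Prop where
  subset : ∀ p ∈ π, p.1.toSet ⊆ I.toSet
  tag_mem : ∀ p ∈ π, p.2 ∈ p.1.toSet
  nonoverlap : ∀ p ∈ π, ∀ q ∈ π, p ≠ q → p.1.inter ∩ q.1.inter = ∅

def Fine (δ : (ι → ℝ) → ℝ) (π : Finset (Brick ι × (ι → ℝ))) : Prop :=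
  ∀ p ∈ π, p.1.toSet ⊆ Metric.ball p.2 (δ p.2)

def TagsIn (Y : Set (ι → ℝ)) (π : Finset (Brick ι × (ι → ℝ))) : Prop :=
  ∀ p ∈ π, p.2 ∈ Y

def InFamily (𝒦 : Finset (Brick ι)) (π : Finset (Brick ι × (ι → ℝ))) : Prop :=
  ∀ p ∈ π, ∃ K ∈ 𝒦, p.1.toSet ⊆ K.toSet

noncomputable def absSum (h : Brick ι → (ι → ℝ) → ℝ) (π : Finset (Brick ι × (ι → ℝ))) : ℝ :=
  ∑ p ∈ π, |h p.1 p.2|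

theorem absSum_nonneg (h : Brick ι → (ι → ℝ) → ℝ) (π : Finset (Brick ι × (ι → ℝ))) :
    0 ≤ absSum h π :=
  Finset.sum_nonneg fun _ _ => abs_nonneg _

theorem ofReal_absSum_eq_sum_filter {κ : Type*} [DecidableEq κ] (h : Brick ι → (ι → ℝ) → ℝ)
    (π : Finset (Brick ι × (ι → ℝ))) (g : Brick ι × (ι → ℝ) → κ) :
    ENNReal.ofReal (absSum h π) =
      ∑ i ∈ π.image g, ENNReal.ofReal (absSum h (π.filter (g · = i))) := by
  rw [← ENNReal.ofReal_sum_of_nonneg fun _ _ => absSum_nonneg _ _, absSum,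
    ← Finset.sum_fiberwise_of_maps_to fun p hp => Finset.mem_image_of_mem g hp]
  rfl

theorem Fine.mono {δ : (ι → ℝ) → ℝ} {π π' : Finset (Brick ι × (ι → ℝ))} (hπ : Fine δ π)
    (h : π' ⊆ π) : Fine δ π' := fun p hp => hπ p (h hp)

theorem TagsIn.mono {Y : Set (ι → ℝ)} {π π' : Finset (Brick ι × (ι → ℝ))} (hπ : TagsIn Y π)
    (h : π' ⊆ π) : TagsIn Y π' := fun p hp => hπ p (h hp)

theorem TaggedDiv.isPartialDiv {I : Brick ι} (D : TaggedDiv I) : IsPartialDiv I D.pieces :=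
  ⟨D.subset_of_mem, D.tag_mem, D.nonoverlap⟩

namespace IsPartialDiv

variable {I : Brick ι} {π π₁ π₂ : Finset (Brick ι × (ι → ℝ))}

theorem mono (hπ : IsPartialDiv I π) (h : π₁ ⊆ π) : IsPartialDiv I π₁ :=
  ⟨fun p hp => hπ.subset p (h hp), fun p hp => hπ.tag_mem p (h hp),
    fun p hp q hq => hπ.nonoverlap p (h hp) q (h hq)⟩

theorem union (h₁ : IsPartialDiv I π₁) (h₂ : IsPartialDiv I π₂)
    (h : ∀ p ∈ π₁, ∀ q ∈ π₂, p.1.inter ∩ q.1.inter = ∅) : IsPartialDiv I (π₁ ∪ π₂) := by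
  refine ⟨Finset.forall_mem_union.2 ⟨h₁.subset, h₂.subset⟩,
    Finset.forall_mem_union.2 ⟨h₁.tag_mem, h₂.tag_mem⟩, fun p hp q hq hpq => ?_⟩
  rcases Finset.mem_union.1 hp with hp | hp <;> rcases Finset.mem_union.1 hq with hq | hq
  exacts [h₁.nonoverlap p hp q hq hpq, h p hp q hq, inter_comm p.1.inter _ ▸ h q hq p hp,
    h₂.nonoverlap p hp q hq hpq]

def toTaggedDiv (hπ : IsPartialDiv I π) (hcover : I.toSet ⊆ ⋃ p ∈ π, p.1.toSet) :
    TaggedDiv I where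
  pieces := π
  subset_of_mem := hπ.subset
  tag_mem := hπ.tag_mem
  nonoverlap := hπ.nonoverlap
  cover := hcover.antisymm (iUnion₂_subset hπ.subset)

noncomputable def toPrepartition (hπ : IsPartialDiv I π) : Prepartition I.toBox where
  boxes := π.image (·.1.toBox)
  le_of_mem' := by
    simp only [Finset.mem_image]
    rintro _ ⟨p, hp, rfl⟩
    exact Brick.toBox_le_toBox_iff.2 (hπ.subset p hp)
  pairwiseDisjoint := by
    simp only [Finset.coe_image, Set.Pairwise, mem_image, Finset.mem_coe]
    rintro _ ⟨p, hp, rfl⟩ _ ⟨q, hq, rfl⟩ hne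
    exact Brick.inter_inter_eq_empty_iff.1 (hπ.nonoverlap p hp q hq (by rintro rfl; exact hne rfl))

theorem iUnion_toPrepartition (hπ : IsPartialDiv I π) :
    hπ.toPrepartition.iUnion = ⋃ p ∈ π, (p.1.toBox : Set (ι → ℝ)) := by
  ext x; simp [Prepartition.mem_iUnion, toPrepartition]

end IsPartialDiv

theorem disjoint_of_inter_eq_empty {π₁ π₂ : Finset (Brick ι × (ι → ℝ))}
    (h : ∀ p ∈ π₁, ∀ q ∈ π₂, p.1.inter ∩ q.1.inter = ∅) : Disjoint π₁ π₂ :=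
  Finset.disjoint_left.2 fun p hp₁ hp₂ =>
    p.1.inter_nonempty.ne_empty (inter_self p.1.inter ▸ h p hp₁ p hp₂)

theorem IsPartialDiv.inFamily_singleton {I : Brick ι} {π : Finset (Brick ι × (ι → ℝ))}
    (hπ : IsPartialDiv I π) : InFamily {I} π := fun p hp =>
  ⟨I, Finset.mem_singleton_self I, hπ.subset p hp⟩

theorem InFamily.inter_eq_empty {𝒦₁ 𝒦₂ : Finset (Brick ι)} {π₁ π₂ : Finset (Brick ι × (ι → ℝ))}
    (h₁ : InFamily 𝒦₁ π₁) (h₂ : InFamily 𝒦₂ π₂)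
    (h : ∀ K ∈ 𝒦₁, ∀ K' ∈ 𝒦₂, K.inter ∩ K'.inter = ∅) :
    ∀ p ∈ π₁, ∀ q ∈ π₂, p.1.inter ∩ q.1.inter = ∅ := fun p hp q hq => by
  obtain ⟨K, hK, hpK⟩ := h₁ p hp
  obtain ⟨K', hK', hqK'⟩ := h₂ q hq
  exact Brick.inter_inter_eq_empty_of_subset hpK hqK' (h K hK K' hK')

noncomputable def boxPieces {I : Brick ι} (ρ : TaggedPrepartition I.toBox) :
    Finset (Brick ι × (ι → ℝ)) :=
  ρ.boxes.image fun B => (Brick.ofBox B, ρ.tag B)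

theorem isPartialDiv_boxPieces {I : Brick ι} {ρ : TaggedPrepartition I.toBox}
    (hρ : ρ.IsHenstock) : IsPartialDiv I (boxPieces ρ) := by
  refine ⟨?_, ?_, ?_⟩ <;> simp only [boxPieces, Finset.forall_mem_image]
  · intro B hB
    rw [Brick.toSet_ofBox, Brick.toSet_eq_Icc_toBox, ← Box.le_iff_Icc]
    exact ρ.le_of_mem' B hB
  · intro B hB
    rw [Brick.toSet_ofBox]
    exact hρ B hB
  · intro B hB B' hB' hne
    refine Brick.inter_inter_eq_empty_iff.2 (ρ.disjoint_coe_of_mem hB hB' ?_)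
    intro hBB
    exact hne (by rw [show B = B' from hBB])

theorem fine_boxPieces {I : Brick ι} {ρ : TaggedPrepartition I.toBox} {δ : (ι → ℝ) → ℝ}
    {r : (ι → ℝ) → Ioi (0 : ℝ)} (hρ : ρ.IsSubordinate r) (hr : ∀ x ∈ I.toSet, (r x : ℝ) < δ x) :
    Fine δ (boxPieces ρ) := by
  simp only [Fine, boxPieces, Finset.forall_mem_image]
  intro B hB
  have htag : ρ.tag B ∈ I.toSet := I.toSet_eq_Icc_toBox ▸ ρ.tag_mem_Icc B
  rw [Brick.toSet_ofBox]
  exact (hρ B hB).trans (Metric.closedBall_subset_ball (hr _ htag))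

theorem Brick.toSet_subset_of_coe_toBox_subset {I : Brick ι} {π : Finset (Brick ι × (ι → ℝ))}
    (h : (I.toBox : Set (ι → ℝ)) ⊆ ⋃ p ∈ π, (p.1.toBox : Set (ι → ℝ))) :
    I.toSet ⊆ ⋃ p ∈ π, p.1.toSet := by
  rw [← I.closure_coe_toBox]
  exact closure_minimal (h.trans (iUnion₂_mono fun p _ => p.1.coe_toBox_subset_toSet))
    (isClosed_biUnion_finset fun p _ => p.1.isClosed_toSet)

/-- Cousin's lemma relative to `π`: Mathlib's `Prepartition.toSubordinate` tiles the rest of `I`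
finely, with half-open boxes disjoint from those of `π`. -/
theorem exists_taggedDiv_superset {I : Brick ι} {δ : (ι → ℝ) → ℝ} (hδ : IsGauge I δ)
    {π : Finset (Brick ι × (ι → ℝ))} (hπ : IsPartialDiv I π) (hfine : Fine δ π) :
    ∃ D : TaggedDiv I, Compat D δ ∧ π ⊆ D.pieces := by
  let r : (ι → ℝ) → Ioi (0 : ℝ) := fun x =>
    if hx : x ∈ I.toSet then ⟨δ x / 2, half_pos (hδ x hx)⟩ else ⟨1, mem_Ioi.2 one_pos⟩
  have hr : ∀ x ∈ I.toSet, (r x : ℝ) < δ x := fun x hx => by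
    simp only [r, dif_pos hx]; linarith [hδ x hx]
  set ρ := hπ.toPrepartition.compl.toSubordinate r
  have hρU : ρ.iUnion = (I.toBox : Set (ι → ℝ)) \ ⋃ p ∈ π, (p.1.toBox : Set (ι → ℝ)) := by
    rw [Prepartition.iUnion_toSubordinate, Prepartition.iUnion_compl, hπ.iUnion_toPrepartition]
  have hρ : IsPartialDiv I (boxPieces ρ) :=
    isPartialDiv_boxPieces (Prepartition.isHenstock_toSubordinate _ r)
  have hcross : ∀ p ∈ π, ∀ q ∈ boxPieces ρ, p.1.inter ∩ q.1.inter = ∅ := by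
    simp only [boxPieces, Finset.forall_mem_image]
    intro p hp B hB
    refine Brick.inter_inter_eq_empty_iff.2 (Set.disjoint_left.2 fun x hxp hxB => ?_)
    have : x ∈ ρ.iUnion := ρ.mem_iUnion.2 ⟨B, hB, hxB⟩
    rw [hρU] at this
    exact this.2 (mem_biUnion hp hxp)
  have hcover : (I.toBox : Set (ι → ℝ)) ⊆ ⋃ p ∈ π ∪ boxPieces ρ, (p.1.toBox : Set (ι → ℝ)) := by
    intro x hx
    simp only [mem_iUnion, Finset.mem_union, boxPieces, Finset.mem_image, exists_prop]
    by_cases hxπ : x ∈ ⋃ p ∈ π, (p.1.toBox : Set (ι → ℝ))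
    · obtain ⟨p, hp, hxp⟩ := mem_iUnion₂.1 hxπ
      exact ⟨p, Or.inl hp, hxp⟩
    · obtain ⟨B, hB, hxB⟩ := ρ.mem_iUnion.1 (hρU ▸ ⟨hx, hxπ⟩ : x ∈ ρ.iUnion)
      exact ⟨_, Or.inr ⟨B, hB, rfl⟩, hxB⟩
  have hρfine : Fine δ (boxPieces ρ) :=
    fine_boxPieces (Prepartition.isSubordinate_toSubordinate _ r) hr
  exact ⟨(hπ.union hρ hcross).toTaggedDiv (Brick.toSet_subset_of_coe_toBox_subset hcover),
    Finset.forall_mem_union.2 ⟨hfine, hρfine⟩, Finset.subset_union_left⟩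

/-! ### Orthants and the face gauge -/

namespace Brick

/-- The orthant of `J` at `x` selected by `s`. In a coordinate where `x` lies on a face of `J` it
spans the whole side of `J`, so that it is never degenerate. -/
noncomputable def orthant (J : Brick ι) (x : ι → ℝ) (s : ι → Bool) : Brick ι where
  lower c := if s c ∧ x c < J.upper c then x c else J.lower c
  upper c := if ¬s c ∧ J.lower c < x c then x c else J.upper c
  lt c := by have := J.lt c; split_ifs <;> simp_all

variable {J : Brick ι} {x : ι → ℝ}

theorem orthant_subset (hx : x ∈ J.toSet) (s : ι → Bool) : (J.orthant x s).toSet ⊆ J.toSet := by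
  intro y hy c
  have := hx c; have := hy c
  simp only [orthant, mem_Icc] at *
  constructor <;> split_ifs at * <;> linarith

theorem mem_orthant (hx : x ∈ J.toSet) (s : ι → Bool) : x ∈ (J.orthant x s).toSet := by
  intro c
  have := hx c
  simp only [orthant, mem_Icc] at *
  constructor <;> split_ifs <;> linarith

theorem orthant_vertex (hx : x ∈ J.toSet) (s : ι → Bool) (c : ι) :
    (J.orthant x s).lower c = x c ∨ (J.orthant x s).upper c = x c := by
  obtain ⟨h₁, h₂⟩ := hx c
  simp only [orthant]
  cases s c <;> simp only [Bool.false_eq_true, false_and, true_and, not_true_eq_false,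
    not_false_eq_true, ite_false] <;> split_ifs <;>
    first | exact Or.inl rfl | exact Or.inr rfl | (left; linarith) | (right; linarith)

theorem exists_mem_orthant {y : ι → ℝ} (hy : y ∈ J.toSet) : ∃ s, y ∈ (J.orthant x s).toSet := by
  refine ⟨fun c => decide (x c ≤ y c), fun c => ?_⟩
  obtain ⟨h₁, h₂⟩ := hy c
  simp only [orthant, mem_Icc, decide_eq_true_eq]
  constructor <;> split_ifs <;> simp_all
  all_goals linarith

theorem orthant_eq_of_mem_inter (hx : x ∈ J.toSet) {s s' : ι → Bool} {y : ι → ℝ}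
    (hy : y ∈ (J.orthant x s).inter) (hy' : y ∈ (J.orthant x s').inter) :
    J.orthant x s = J.orthant x s' := by
  ext c <;> have := hx c <;> have := hy c <;> have := hy' c <;>
    simp only [orthant, mem_Icc, mem_Ioo] at * <;> split_ifs at * <;> simp_all <;> linarith

end Brick

def IsAdditive (h : Brick ι → (ι → ℝ) → ℝ) : Prop :=
  ∀ (P : ι → ℝ) (K : Brick ι) (D : TaggedDiv K), (∑ p ∈ D.pieces, h p.1 P) = h K P

noncomputable def orthPieces (J : Brick ι) (x : ι → ℝ) : Finset (Brick ι × (ι → ℝ)) :=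
  Finset.univ.image fun s => (J.orthant x s, x)

noncomputable def orthDiv {J : Brick ι} {x : ι → ℝ} (hx : x ∈ J.toSet) : TaggedDiv J where
  pieces := orthPieces J x
  subset_of_mem := by
    simp only [orthPieces, Finset.forall_mem_image, Finset.mem_univ, true_implies]
    exact J.orthant_subset hx
  tag_mem := by
    simp only [orthPieces, Finset.forall_mem_image, Finset.mem_univ, true_implies]
    exact J.mem_orthant hx
  nonoverlap := by
    simp only [orthPieces, Finset.forall_mem_image, Finset.mem_univ, true_implies]
    refine fun s s' hne => eq_empty_of_forall_notMem fun y hy => hne ?_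
    rw [J.orthant_eq_of_mem_inter hx hy.1 hy.2]
  cover := by
    refine Subset.antisymm (fun y hy => ?_) (iUnion₂_subset ?_)
    · obtain ⟨s, hs⟩ := J.exists_mem_orthant (x := x) hy
      exact mem_biUnion (Finset.mem_image_of_mem _ (Finset.mem_univ s)) hs
    · simp only [orthPieces, Finset.forall_mem_image, Finset.mem_univ, true_implies]
      exact J.orthant_subset hx

theorem abs_le_absSum_orthPieces {h : Brick ι → (ι → ℝ) → ℝ} (hadd : IsAdditive h)
    {J : Brick ι} {x : ι → ℝ} (hx : x ∈ J.toSet) : |h J x| ≤ absSum h (orthPieces J x) := by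
  rw [← hadd x J (orthDiv hx)]
  refine (Finset.abs_sum_le_sum_abs _ _).trans_eq (Finset.sum_congr rfl fun p hp => ?_)
  obtain ⟨s, -, rfl⟩ := Finset.mem_image.1 hp
  rfl

noncomputable def orthRefine (π : Finset (Brick ι × (ι → ℝ))) : Finset (Brick ι × (ι → ℝ)) :=
  π.biUnion fun p => orthPieces p.1 p.2

theorem mem_orthRefine {π : Finset (Brick ι × (ι → ℝ))} {q : Brick ι × (ι → ℝ)} :
    q ∈ orthRefine π ↔ ∃ p ∈ π, ∃ s, (p.1.orthant p.2 s, p.2) = q := by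
  simp [orthRefine, orthPieces]

namespace IsPartialDiv

variable {I : Brick ι} {π : Finset (Brick ι × (ι → ℝ))}

theorem orthRefine (hπ : IsPartialDiv I π) : IsPartialDiv I (orthRefine π) := by
  refine ⟨?_, ?_, ?_⟩ <;> simp only [mem_orthRefine, forall_exists_index, and_imp]
  · rintro _ p hp s rfl
    exact (p.1.orthant_subset (hπ.tag_mem p hp) s).trans (hπ.subset p hp)
  · rintro _ p hp s rfl
    exact p.1.mem_orthant (hπ.tag_mem p hp) s
  · rintro _ p hp s rfl _ p' hp' s' rfl hne
    by_cases hpp : p = p'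
    · subst hpp
      refine eq_empty_of_forall_notMem fun y hy => hne ?_
      rw [p.1.orthant_eq_of_mem_inter (hπ.tag_mem p hp) hy.1 hy.2]
    · exact Brick.inter_inter_eq_empty_of_subset (p.1.orthant_subset (hπ.tag_mem p hp) s)
        (p'.1.orthant_subset (hπ.tag_mem p' hp') s') (hπ.nonoverlap p hp p' hp' hpp)

theorem absSum_le_absSum_orthRefine {h : Brick ι → (ι → ℝ) → ℝ} (hadd : IsAdditive h)
    (hπ : IsPartialDiv I π) : absSum h π ≤ absSum h (_root_.orthRefine π) := by
  have hdisj : (π : Set (Brick ι × (ι → ℝ))).PairwiseDisjoint fun p => orthPieces p.1 p.2 := by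
    intro p hp p' hp' hne
    refine Finset.disjoint_left.2 fun q hq hq' => ?_
    have hsub : ∀ r ∈ π, q ∈ orthPieces r.1 r.2 → q.1.toSet ⊆ r.1.toSet := fun r hr hqr => by
      obtain ⟨s, -, rfl⟩ := Finset.mem_image.1 hqr
      exact r.1.orthant_subset (hπ.tag_mem r hr) s
    exact q.1.inter_nonempty.ne_empty (inter_self q.1.inter ▸
      Brick.inter_inter_eq_empty_of_subset (hsub p hp hq) (hsub p' hp' hq')
        (hπ.nonoverlap p hp p' hp' hne))
  rw [absSum, absSum, _root_.orthRefine, Finset.sum_biUnion hdisj]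
  exact Finset.sum_le_sum fun p hp => abs_le_absSum_orthPieces hadd (hπ.tag_mem p hp)

end IsPartialDiv

theorem Fine.orthRefine {δ : (ι → ℝ) → ℝ} {I : Brick ι} {π : Finset (Brick ι × (ι → ℝ))}
    (hfine : Fine δ π) (hπ : IsPartialDiv I π) : Fine δ (orthRefine π) := by
  simp only [Fine, mem_orthRefine, forall_exists_index, and_imp]
  rintro _ p hp s rfl
  exact (p.1.orthant_subset (hπ.tag_mem p hp) s).trans (hfine p hp)

theorem TagsIn.orthRefine {Y : Set (ι → ℝ)} {π : Finset (Brick ι × (ι → ℝ))}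
    (htag : TagsIn Y π) : TagsIn Y (orthRefine π) := by
  simp only [TagsIn, mem_orthRefine, forall_exists_index, and_imp]
  rintro _ p hp s rfl
  exact htag p hp

noncomputable def faceDists (C : Finset (Brick ι)) (x : ι → ℝ) : Finset ℝ :=
  ((C ×ˢ Finset.univ).biUnion fun Kc : Brick ι × ι =>
    {|Kc.1.lower Kc.2 - x Kc.2|, |Kc.1.upper Kc.2 - x Kc.2|}).filter (0 < ·)

/-- A gauge below `β` and below every positive distance from `x` to a face of a brick of `C`:
the faces of `C` within reach of a brick fine for it and tagged at `x` all pass through `x`. -/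
noncomputable def faceGauge (C : Finset (Brick ι)) (β : (ι → ℝ) → ℝ) (x : ι → ℝ) : ℝ :=
  (insert (β x) (faceDists C x)).min' (Finset.insert_nonempty _ _)

section faceGauge

variable {C : Finset (Brick ι)} {β : (ι → ℝ) → ℝ} {x : ι → ℝ}

theorem faceGauge_le : faceGauge C β x ≤ β x :=
  Finset.min'_le _ _ (Finset.mem_insert_self _ _)

theorem IsGauge.faceGauge {I : Brick ι} (hβ : IsGauge I β) (C : Finset (Brick ι)) :
    IsGauge I (faceGauge C β) := fun x hx =>
  (Finset.lt_min'_iff _ _).2 <| Finset.forall_mem_insert _ _ _ |>.2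
    ⟨hβ x hx, fun _ hd => (Finset.mem_filter.1 hd).2⟩

theorem faceGauge_le_abs_sub {K : Brick ι} (hK : K ∈ C) {c : ι} {a : ℝ}
    (ha : a = K.lower c ∨ a = K.upper c) (hax : a ≠ x c) : faceGauge C β x ≤ |a - x c| := by
  refine Finset.min'_le _ _ (Finset.mem_insert_of_mem (Finset.mem_filter.2 ⟨?_, ?_⟩))
  · refine Finset.mem_biUnion.2 ⟨(K, c), Finset.mem_product.2 ⟨hK, Finset.mem_univ c⟩, ?_⟩
    rcases ha with rfl | rfl <;> simp
  · exact abs_pos.2 (sub_ne_zero.2 hax)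

end faceGauge

theorem le_and_le_of_abs_sub_lt {a b k l x σ : ℝ} (hab : a < b) (hx : a = x ∨ b = x)
    (ha : |a - x| < σ) (hb : |b - x| < σ) (hk : k ≤ (a + b) / 2) (hl : (a + b) / 2 ≤ l)
    (hkσ : k ≠ x → σ ≤ |k - x|) (hlσ : l ≠ x → σ ≤ |l - x|) : k ≤ a ∧ b ≤ l := by
  have hclose : ∀ t, a < t → t < b → t ≠ x ∧ |t - x| < σ := fun t hat htb => by
    rcases hx with rfl | rfl
    · rw [abs_of_pos (sub_pos.2 hat)]
      rw [abs_of_pos (sub_pos.2 hab)] at hb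
      exact ⟨hat.ne', by linarith⟩
    · rw [abs_of_neg (sub_neg.2 htb)]
      rw [abs_of_neg (sub_neg.2 hab)] at ha
      exact ⟨htb.ne, by linarith⟩
  constructor
  · by_contra! hak
    obtain ⟨hkx, hkσ'⟩ := hclose k hak (by linarith)
    exact (hkσ hkx).not_gt hkσ'
  · by_contra! hlb
    obtain ⟨hlx, hlσ'⟩ := hclose l (by linarith) hlb
    exact (hlσ hlx).not_gt hlσ'

theorem Brick.toSet_subset_of_faceGauge {C : Finset (Brick ι)} {β : (ι → ℝ) → ℝ}
    {Q K : Brick ι} {x : ι → ℝ} (hvert : ∀ c, Q.lower c = x c ∨ Q.upper c = x c)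
    (hQ : Q.toSet ⊆ Metric.ball x (faceGauge C β x)) (hK : K ∈ C) (hmid : Q.mid ∈ K.toSet) :
    Q.toSet ⊆ K.toSet := by
  have hcoord : ∀ y ∈ Q.toSet, ∀ c, |y c - x c| < faceGauge C β x := fun y hy c =>
    (dist_le_pi_dist y x c).trans_lt (Metric.mem_ball.1 (hQ hy))
  rw [toSet_eq_Icc, toSet_eq_Icc, Icc_subset_Icc_iff (fun c => (Q.lt c).le)]
  have h := fun c => le_and_le_of_abs_sub_lt (Q.lt c) (hvert c)
    (hcoord _ Q.lower_mem_toSet c) (hcoord _ Q.upper_mem_toSet c) (hmid c).1 (hmid c).2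
    (faceGauge_le_abs_sub hK (Or.inl rfl)) (faceGauge_le_abs_sub hK (Or.inr rfl))
  exact ⟨fun c => (h c).1, fun c => (h c).2⟩

theorem inFamily_orthRefine {I : Brick ι} {C : Finset (Brick ι)} {β : (ι → ℝ) → ℝ}
    (hC : I.toSet ⊆ ⋃ K ∈ C, K.toSet) {π : Finset (Brick ι × (ι → ℝ))} (hπ : IsPartialDiv I π)
    (hfine : Fine (faceGauge C β) π) : InFamily C (orthRefine π) := by
  simp only [InFamily, mem_orthRefine, forall_exists_index, and_imp]
  rintro _ p hp s rfl
  have hx := hπ.tag_mem p hp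
  have hsub := p.1.orthant_subset hx s
  obtain ⟨K, hK, hmid⟩ := mem_iUnion₂.1 (hC (hπ.subset p hp (hsub (Brick.mid_mem_toSet _))))
  exact ⟨K, hK, Brick.toSet_subset_of_faceGauge (p.1.orthant_vertex hx s)
    (hsub.trans (hfine p hp)) hK hmid⟩

/-! ### Localized variations -/

section variation

variable (I : Brick ι) (h : Brick ι → (ι → ℝ) → ℝ)

noncomputable def fineSup (δ : (ι → ℝ) → ℝ) (Y : Set (ι → ℝ)) (𝒦 : Finset (Brick ι)) : ℝ≥0∞ :=
  ⨆ (π) (_ : IsPartialDiv I π ∧ Fine δ π ∧ TagsIn Y π ∧ InFamily 𝒦 π),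
    ENNReal.ofReal (absSum h π)

/-- For non-overlapping `𝒦` this stands in for `∑ K ∈ 𝒦, V(h; K; Y)`, without defining the
variation on sub-bricks of `I`. -/
noncomputable def localVar (Y : Set (ι → ℝ)) (𝒦 : Finset (Brick ι)) : ℝ≥0∞ :=
  ⨅ (δ) (_ : IsGauge I δ), fineSup I h δ Y 𝒦

variable {I h} {δ : (ι → ℝ) → ℝ} {Y : Set (ι → ℝ)} {𝒦 : Finset (Brick ι)}
  {π : Finset (Brick ι × (ι → ℝ))}

theorem le_fineSup (hπ : IsPartialDiv I π) (hfine : Fine δ π) (htag : TagsIn Y π)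
    (h𝒦 : InFamily 𝒦 π) : ENNReal.ofReal (absSum h π) ≤ fineSup I h δ Y 𝒦 :=
  le_iSup₂_of_le π ⟨hπ, hfine, htag, h𝒦⟩ le_rfl

theorem fineSup_mono {δ' : (ι → ℝ) → ℝ} {Y' : Set (ι → ℝ)} (hδ : ∀ x, δ x ≤ δ' x)
    (hY : Y ⊆ Y') : fineSup I h δ Y 𝒦 ≤ fineSup I h δ' Y' 𝒦 :=
  iSup₂_le fun _ ⟨hπ, hfine, htag, h𝒦⟩ => le_fineSup hπ
    (fun p hp => (hfine p hp).trans (Metric.ball_subset_ball (hδ p.2)))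
    (fun p hp => hY (htag p hp)) h𝒦

theorem fineSup_le_fineSup_singleton : fineSup I h δ Y 𝒦 ≤ fineSup I h δ Y {I} :=
  iSup₂_le fun _ ⟨hπ, hfine, htag, _⟩ => le_fineSup hπ hfine htag hπ.inFamily_singleton

theorem localVar_le_fineSup (hδ : IsGauge I δ) : localVar I h Y 𝒦 ≤ fineSup I h δ Y 𝒦 :=
  iInf₂_le δ hδ

theorem localVar_mono {Y' : Set (ι → ℝ)} (hY : Y ⊆ Y') : localVar I h Y 𝒦 ≤ localVar I h Y' 𝒦 :=
  iInf₂_mono fun _ _ => fineSup_mono (fun _ => le_rfl) hY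

theorem varSum_ite_eq_absSum_filter (D : TaggedDiv I) :
    varSum (fun J P => if P ∈ Y then h J P else 0) D = absSum h (D.pieces.filter (·.2 ∈ Y)) := by
  rw [varSum, absSum, Finset.sum_filter]
  exact Finset.sum_congr rfl fun p _ => by split_ifs <;> simp

theorem variationOn_eq_localVar : variationOn I h Y = localVar I h Y {I} := by
  refine iInf_congr fun δ => iInf_congr fun hδ =>
    le_antisymm (iSup₂_le fun D hD => ?_) (iSup₂_le ?_)
  · rw [varSum_ite_eq_absSum_filter]
    have hsub := Finset.filter_subset (·.2 ∈ Y) D.pieces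
    exact le_fineSup (D.isPartialDiv.mono hsub) (fun p hp => hD p (hsub hp))
      (fun p hp => (Finset.mem_filter.1 hp).2) (D.isPartialDiv.mono hsub).inFamily_singleton
  · rintro π ⟨hπ, hfine, htag, -⟩
    obtain ⟨D, hD, hπD⟩ := exists_taggedDiv_superset hδ hπ hfine
    refine le_iSup₂_of_le D hD (ENNReal.ofReal_le_ofReal ?_)
    rw [varSum_ite_eq_absSum_filter]
    exact Finset.sum_le_sum_of_subset_of_nonneg
      (fun p hp => Finset.mem_filter.2 ⟨hπD hp, htag p hp⟩) fun _ _ _ => abs_nonneg _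

theorem fineSup_add_fineSup_le {𝒦₁ 𝒦₂ : Finset (Brick ι)}
    (h𝒦 : ∀ K ∈ 𝒦₁, ∀ K' ∈ 𝒦₂, K.inter ∩ K'.inter = ∅) :
    fineSup I h δ Y 𝒦₁ + fineSup I h δ Y 𝒦₂ ≤ fineSup I h δ Y (𝒦₁ ∪ 𝒦₂) := by
  have hempty : ∀ 𝒦 : Finset (Brick ι),
      IsPartialDiv I ∅ ∧ Fine δ ∅ ∧ TagsIn Y ∅ ∧ InFamily 𝒦 ∅ := fun _ =>
    ⟨⟨by simp, by simp, by simp⟩, by simp [Fine], by simp [TagsIn], by simp [InFamily]⟩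
  refine ENNReal.biSup_add_biSup_le' ⟨∅, hempty _⟩ ⟨∅, hempty _⟩
    fun π₁ ⟨hπ₁, hfine₁, htag₁, hfam₁⟩ π₂ ⟨hπ₂, hfine₂, htag₂, hfam₂⟩ => ?_
  have hcross := hfam₁.inter_eq_empty hfam₂ h𝒦
  rw [← ENNReal.ofReal_add (absSum_nonneg h π₁) (absSum_nonneg h π₂), absSum, absSum,
    ← Finset.sum_union (disjoint_of_inter_eq_empty hcross)]
  refine le_fineSup (hπ₁.union hπ₂ hcross) (Finset.forall_mem_union.2 ⟨hfine₁, hfine₂⟩)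
    (Finset.forall_mem_union.2 ⟨htag₁, htag₂⟩) (Finset.forall_mem_union.2 ⟨?_, ?_⟩)
  · exact fun p hp => (hfam₁ p hp).imp fun K hK => ⟨Finset.mem_union_left _ hK.1, hK.2⟩
  · exact fun p hp => (hfam₂ p hp).imp fun K hK => ⟨Finset.mem_union_right _ hK.1, hK.2⟩

theorem sum_localVar_le {κ : Type*} (s : Finset κ) (F : κ → Finset (Brick ι))
    (hF : ∀ i ∈ s, ∀ j ∈ s, i ≠ j → ∀ K ∈ F i, ∀ K' ∈ F j, K.inter ∩ K'.inter = ∅) :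
    ∑ i ∈ s, localVar I h Y (F i) ≤ localVar I h Y {I} := by
  refine le_iInf₂ fun δ hδ => ?_
  suffices ∑ i ∈ s, fineSup I h δ Y (F i) ≤ fineSup I h δ Y (s.biUnion F) from
    (Finset.sum_le_sum fun i _ => localVar_le_fineSup hδ).trans
      (this.trans fineSup_le_fineSup_singleton)
  induction s using Finset.induction_on with
  | empty => simp
  | insert a s ha ih =>
    rw [Finset.sum_insert ha, Finset.biUnion_insert]
    refine (add_le_add le_rfl (ih fun i hi j hj => hF i (Finset.mem_insert_of_mem hi) j
      (Finset.mem_insert_of_mem hj))).trans (fineSup_add_fineSup_le fun K hK K' hK' => ?_)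
    obtain ⟨j, hj, hK'j⟩ := Finset.mem_biUnion.1 hK'
    exact hF a (Finset.mem_insert_self a s) j (Finset.mem_insert_of_mem hj)
      (fun haj => ha (haj ▸ hj)) K hK K' hK'j

theorem fineSup_faceGauge_le (hadd : IsAdditive h)
    {C : Finset (Brick ι)} (hC : I.toSet ⊆ ⋃ K ∈ C, K.toSet) (F : Finset (Brick ι))
    (β : (ι → ℝ) → ℝ) :
    fineSup I h (faceGauge C β) Y {I} ≤
      fineSup I h β Y F + fineSup I h (faceGauge C β) Y (C \ F) := by
  refine iSup₂_le fun π ⟨hπ, hfine, htag, _⟩ => ?_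
  set π' := orthRefine π
  have hπ' := hπ.orthRefine
  have hfine' := hfine.orthRefine hπ
  have htag' := htag.orthRefine
  have hC' := inFamily_orthRefine hC hπ hfine
  set P : Brick ι × (ι → ℝ) → Prop := fun q => ∃ K ∈ F, q.1.toSet ⊆ K.toSet
  have hsub := Finset.filter_subset P π'
  have hsub' := Finset.filter_subset (¬P ·) π'
  have hCF : InFamily (C \ F) (π'.filter (¬P ·)) := fun q hq => by
    obtain ⟨hq, hnP⟩ := Finset.mem_filter.1 hq
    obtain ⟨K, hK, hqK⟩ := hC' q hq
    exact ⟨K, Finset.mem_sdiff.2 ⟨hK, fun hKF => hnP ⟨K, hKF, hqK⟩⟩, hqK⟩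
  calc ENNReal.ofReal (absSum h π) ≤ ENNReal.ofReal (absSum h π') :=
        ENNReal.ofReal_le_ofReal (hπ.absSum_le_absSum_orthRefine hadd)
    _ = ENNReal.ofReal (absSum h (π'.filter P)) +
          ENNReal.ofReal (absSum h (π'.filter (¬P ·))) := by
      rw [← ENNReal.ofReal_add (absSum_nonneg _ _) (absSum_nonneg _ _), absSum, absSum, absSum,
        Finset.sum_filter_add_sum_filter_not]
    _ ≤ _ :=
      add_le_add ((le_fineSup (hπ'.mono hsub) (hfine'.mono hsub) (htag'.mono hsub)
        fun q hq => (Finset.mem_filter.1 hq).2).trans (fineSup_mono (fun _ => faceGauge_le) le_rfl))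
        (le_fineSup (hπ'.mono hsub') (hfine'.mono hsub') (htag'.mono hsub') hCF)

/-- A Saks–Henstock lemma. Complete `π` to a division with bricks `C`: fine partial divisions
inside `C \ F` can be added to `π`, while a fine division splits into parts inside `F` and inside
`C \ F` (`fineSup_faceGauge_le`); comparing both with the near-optimality of `δ` gives the bound. -/
theorem ofReal_absSum_le_localVar_add (hadd : IsAdditive h)
    (hδ : IsGauge I δ) {e : ℝ≥0} (hδe : fineSup I h δ Y {I} ≤ localVar I h Y {I} + e)
    (hfin : localVar I h Y {I} ≠ ⊤) (hπ : IsPartialDiv I π) (hfine : Fine δ π)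
    (htag : TagsIn Y π) :
    ENNReal.ofReal (absSum h π) ≤ localVar I h Y (π.image Prod.fst) + e := by
  obtain ⟨D, -, hπD⟩ := exists_taggedDiv_superset hδ hπ hfine
  set F := π.image Prod.fst
  set C := D.pieces.image Prod.fst
  have hC : I.toSet ⊆ ⋃ K ∈ C, K.toSet := by
    rw [D.cover]
    exact iUnion₂_subset fun p hp => subset_biUnion_of_mem (u := Brick.toSet)
      (Finset.mem_coe.2 (Finset.mem_image_of_mem _ hp))
  have hFC : ∀ K ∈ F, ∀ K' ∈ C \ F, K.inter ∩ K'.inter = ∅ := by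
    simp only [F, C, Finset.mem_sdiff, Finset.mem_image]
    rintro _ ⟨p, hp, rfl⟩ _ ⟨⟨q, hq, rfl⟩, hqF⟩
    exact D.nonoverlap p (hπD hp) q hq (by rintro rfl; exact hqF ⟨p, hp, rfl⟩)
  have hF : InFamily F π := fun p hp => ⟨p.1, Finset.mem_image_of_mem _ hp, subset_rfl⟩
  rw [localVar, ENNReal.iInf_add]
  refine le_iInf fun γ => ?_
  rw [ENNReal.iInf_add]
  refine le_iInf fun hγ => ?_
  set σ := faceGauge C fun x => min (γ x) (δ x)
  have hσ : IsGauge I σ := IsGauge.faceGauge (fun x hx => lt_min (hγ x hx) (hδ x hx)) C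
  set b := fineSup I h σ Y (C \ F)
  have hupper : ENNReal.ofReal (absSum h π) + b ≤ fineSup I h δ Y {I} :=
    calc _ ≤ fineSup I h δ Y F + fineSup I h δ Y (C \ F) :=
          add_le_add (le_fineSup hπ hfine htag hF)
            (fineSup_mono (fun _ => faceGauge_le.trans (min_le_right _ _)) le_rfl)
      _ ≤ fineSup I h δ Y (F ∪ C \ F) := fineSup_add_fineSup_le hFC
      _ ≤ _ := fineSup_le_fineSup_singleton
  have hlower : localVar I h Y {I} ≤ fineSup I h γ Y F + b :=
    (localVar_le_fineSup hσ).trans ((fineSup_faceGauge_le hadd hC F _).trans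
      (add_le_add (fineSup_mono (fun _ => min_le_left _ _) le_rfl) le_rfl))
  have hb : b ≠ ⊤ := ne_top_of_le_ne_top (ENNReal.add_ne_top.2 ⟨hfin, ENNReal.coe_ne_top⟩)
    (le_add_self.trans (hupper.trans hδe))
  refine (ENNReal.add_le_add_iff_right hb).1 ?_
  calc ENNReal.ofReal (absSum h π) + b ≤ localVar I h Y {I} + e := hupper.trans hδe
    _ ≤ fineSup I h γ Y F + b + e := add_le_add hlower le_rfl
    _ = fineSup I h γ Y F + e + b := add_right_comm _ _ _

theorem exists_gauge_fineSup_le (hfin : localVar I h Y {I} ≠ ⊤) {e : ℝ≥0} (he : 0 < e) :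
    ∃ δ, IsGauge I δ ∧ fineSup I h δ Y {I} ≤ localVar I h Y {I} + e := by
  obtain ⟨δ, hδ⟩ := iInf_lt_iff.1 (ENNReal.lt_add_right hfin (ENNReal.coe_ne_zero.2 he.ne'))
  obtain ⟨hδ, hlt⟩ := iInf_lt_iff.1 hδ
  exact ⟨δ, hδ, hlt.le⟩

theorem IsPartialDiv.inter_eq_empty_of_filter {κ : Type*} [DecidableEq κ]
    (hπ : IsPartialDiv I π) (g : Brick ι × (ι → ℝ) → κ) {i j : κ} (hij : i ≠ j) :
    ∀ K ∈ (π.filter (g · = i)).image Prod.fst, ∀ K' ∈ (π.filter (g · = j)).image Prod.fst,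
      K.inter ∩ K'.inter = ∅ := by
  simp only [Finset.mem_image, Finset.mem_filter]
  rintro _ ⟨p, ⟨hp, rfl⟩, rfl⟩ _ ⟨q, ⟨hq, hqj⟩, rfl⟩
  exact hπ.nonoverlap p hp q hq (by rintro rfl; exact hij hqj)

theorem localVar_iUnion_le (hadd : IsAdditive h) (X : ℕ → Set (ι → ℝ)) (hmono : Monotone X) :
    localVar I h (⋃ j, X j) {I} ≤ ⨆ j, localVar I h (X j) {I} := by
  refine ENNReal.le_of_forall_pos_le_add fun ε hε hS => ?_
  have hfin : ∀ i, localVar I h (X i) {I} ≠ ⊤ := fun i => ((le_iSup _ i).trans_lt hS).ne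
  obtain ⟨e, he, hesum⟩ := ENNReal.exists_pos_sum_of_countable (ENNReal.coe_ne_zero.2 hε.ne') ℕ
  choose δ hδ hδe using fun i => exists_gauge_fineSup_le (hfin i) (he i)
  choose n hn using fun x => (em (x ∈ ⋃ j, X j)).elim
    (fun hx => (mem_iUnion.1 hx).imp fun _ hi _ => hi) fun hx => ⟨0, fun h => absurd h hx⟩
  refine (localVar_le_fineSup (δ := fun x => δ (n x) x) fun x hx => hδ _ x hx).trans
    (iSup₂_le fun π ⟨hπ, hfine, htag, _⟩ => ?_)
  set s := π.image fun p => n p.2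
  set N := s.sup id
  let πi : ℕ → Finset (Brick ι × (ι → ℝ)) := fun i => π.filter (n ·.2 = i)
  have hfiber : ∀ i ∈ s, ENNReal.ofReal (absSum h (πi i)) ≤
      localVar I h (X N) ((πi i).image Prod.fst) + e i := fun i hi => by
    have hsub := Finset.filter_subset (n ·.2 = i) π
    refine (ofReal_absSum_le_localVar_add hadd (hδ i) (hδe i) (hfin i) (hπ.mono hsub)
      (fun p hp => ?_) (fun p hp => ?_)).trans
      (add_le_add (localVar_mono (hmono (Finset.le_sup (f := id) hi))) le_rfl)
    · obtain ⟨hpπ, rfl⟩ := Finset.mem_filter.1 hp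
      exact hfine p hpπ
    · obtain ⟨hpπ, rfl⟩ := Finset.mem_filter.1 hp
      exact hn _ (htag p hpπ)
  calc ENNReal.ofReal (absSum h π)
      = ∑ i ∈ s, ENNReal.ofReal (absSum h (πi i)) := ofReal_absSum_eq_sum_filter h π _
    _ ≤ ∑ i ∈ s, localVar I h (X N) ((πi i).image Prod.fst) + ∑ i ∈ s, (e i : ℝ≥0∞) :=
        (Finset.sum_le_sum hfiber).trans_eq Finset.sum_add_distrib
    _ ≤ localVar I h (X N) {I} + ε :=
        add_le_add (sum_localVar_le _ _ fun i _ j _ hij => hπ.inter_eq_empty_of_filter _ hij)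
          ((ENNReal.sum_le_tsum s).trans hesum.le)
    _ ≤ (⨆ j, localVar I h (X j) {I}) + ε :=
        add_le_add (le_iSup (fun j => localVar I h (X j) {I}) N) le_rfl

theorem variationOn_iUnion (hadd : IsAdditive h) (X : ℕ → Set (ι → ℝ)) (hmono : Monotone X) :
    variationOn I h (⋃ j, X j) = ⨆ j, variationOn I h (X j) := by
  simp only [variationOn_eq_localVar]
  exact (localVar_iUnion_le hadd X hmono).antisymm
    (iSup_le fun j => localVar_mono (subset_iUnion X j))

end variation

/-! ### Additivity of the volume -/

open MeasureTheory in
theorem Brick.volume_toSet (J : Brick ι) : volume J.toSet = ENNReal.ofReal J.vol := by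
  rw [toSet_eq_Icc, Real.volume_Icc_pi, vol,
    ENNReal.ofReal_prod_of_nonneg fun c _ => sub_nonneg.2 (J.lt c).le]

open MeasureTheory in
theorem Brick.volume_toSet_inter_toSet {J K : Brick ι} (h : J.inter ∩ K.inter = ∅) :
    volume (J.toSet ∩ K.toSet) = 0 := by
  have : volume (J.toSet ∩ K.toSet) = volume (J.inter ∩ K.inter) := by
    rw [toSet_eq_Icc, toSet_eq_Icc, Icc_inter_Icc, Real.volume_Icc_pi, inter_eq_pi, inter_eq_pi,
      ← pi_inter_distrib]
    simp only [Ioo_inter_Ioo, Real.volume_pi_Ioo]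
    rfl
  rw [this, h, measure_empty]

open MeasureTheory in
theorem TaggedDiv.sum_vol {K : Brick ι} (D : TaggedDiv K) : ∑ p ∈ D.pieces, p.1.vol = K.vol := by
  have h := measure_biUnion_finset₀ (μ := volume) (f := fun p : Brick ι × (ι → ℝ) => p.1.toSet)
    (fun p hp q hq hpq => Brick.volume_toSet_inter_toSet (D.nonoverlap p hp q hq hpq))
    fun p _ => p.1.isClosed_toSet.measurableSet.nullMeasurableSet
  rw [← D.cover, Brick.volume_toSet] at h
  simp only [Brick.volume_toSet] at h
  rw [← ENNReal.ofReal_sum_of_nonneg fun p _ => p.1.vol_nonneg] at h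
  exact (ENNReal.ofReal_eq_ofReal_iff (Finset.sum_nonneg fun p _ => p.1.vol_nonneg)
    K.vol_nonneg).1 h.symm

/-- For `h` additive in its brick argument, the variation restricted to an increasing
sequence of sets is continuous from below; in particular the outer measure is continuous
from below. -/
theorem variation_continuous_from_below (I : Brick ι) (h : Brick ι → (ι → ℝ) → ℝ)
    (hadd : ∀ (P : ι → ℝ) (K : Brick ι) (D : TaggedDiv K),
      (∑ p ∈ D.pieces, h p.1 P) = h K P)
    (X : ℕ → Set (ι → ℝ)) (hmono : Monotone X) :
    (variationOn I h (⋃ j, X j) = ⨆ j, variationOn I h (X j)) ∧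
    (mustar I (⋃ j, X j) = ⨆ j, mustar I (X j)) :=
  ⟨variationOn_iUnion hadd X hmono, variationOn_iUnion (fun _ _ D => D.sum_vol) X hmono⟩
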